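/- arXiv:0804.2157 — 3 statements merged into one kernel-verified Lean document; each statement's English description precedes it below -/
import Mathlib

section
/- Let f = (aX + p(Y), bY + c) be a triangular automorphism of ℂ² with a, b ∈ ℂ*. Then every element of the multiplicative monoid generated by a and b, i.e., every a^k b^l with k, l ∈ ℕ, is an eigenvalue of the pullback f* acting on ℂ[X,Y], and conversely every eigenvalue of f* is of this form. -/
namespace Stmt3Aux
section Poly
open Polynomial


-- coefficient of X^n in (C u * X + C v)^n
lemma coeff_linpow {S : Type*} [CommSemiring S] (u v : S) (n : ℕ) :
    ((C u * X + C v) ^ n).coeff n = u ^ n := by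
  induction n with
  | zero => simp
  | succ n ih =>
    have hdeg : ((C u * X + C v) ^ n).coeff (n + 1) = 0 := by
      apply coeff_eq_zero_of_natDegree_lt
      calc ((C u * X + C v) ^ n).natDegree ≤ n * (C u * X + C v).natDegree :=
            natDegree_pow_le
        _ ≤ n * 1 := Nat.mul_le_mul_left n natDegree_linear_le
        _ < n + 1 := by omega
    rw [pow_succ, mul_comm, add_mul, coeff_add, mul_assoc, coeff_C_mul, coeff_X_mul,
      coeff_C_mul, ih, hdeg, mul_zero, add_zero, pow_succ, mul_comm]

lemma key {R S : Type*} [CommSemiring R] [CommSemiring S] (φ : R →+* S) (u v : S) (p : R[X]) :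
    (p.eval₂ ((C : S →+* S[X]).comp φ) (C u * X + C v)).coeff p.natDegree
      = φ p.leadingCoeff * u ^ p.natDegree := by
  set n := p.natDegree
  rw [eval₂_eq_sum_range, finset_sum_coeff, Finset.sum_range_succ]
  have h0 : ∀ i ∈ Finset.range n,
      ((((C : S →+* S[X]).comp φ) (p.coeff i)) * (C u * X + C v) ^ i).coeff n = 0 := by
    intro i hi
    simp only [Finset.mem_range] at hi
    apply coeff_eq_zero_of_natDegree_lt
    calc (((C : S →+* S[X]).comp φ) (p.coeff i) * (C u * X + C v) ^ i).natDegree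
        ≤ (((C : S →+* S[X]).comp φ) (p.coeff i)).natDegree + ((C u * X + C v) ^ i).natDegree :=
          natDegree_mul_le
      _ ≤ 0 + i * 1 := by
          refine Nat.add_le_add ?_ (natDegree_pow_le.trans (Nat.mul_le_mul_left i natDegree_linear_le))
          simp [natDegree_C]
      _ < n := by omega
  rw [Finset.sum_eq_zero h0, zero_add]
  simp only [RingHom.coe_comp, Function.comp_apply, coeff_C_mul, coeff_linpow]
  exact congrArg (fun t => φ p.leadingCoeff * t) (coeff_linpow u v n)


lemma deg_le {R S : Type*} [CommSemiring R] [CommSemiring S] (φ : R →+* S) (u v : S) (p : R[X]) :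
    (p.eval₂ ((C : S →+* S[X]).comp φ) (C u * X + C v)).degree ≤ p.degree := by
  rcases eq_or_ne p 0 with rfl | hp
  · simp
  rw [eval₂_eq_sum_range]
  refine (degree_sum_le _ _).trans ?_
  apply Finset.sup_le
  intro i hi
  simp only [Finset.mem_range] at hi
  calc ((((C : S →+* S[X]).comp φ) (p.coeff i)) * (C u * X + C v) ^ i).degree
      ≤ (((C : S →+* S[X]).comp φ) (p.coeff i)).degree + ((C u * X + C v) ^ i).degree :=
        degree_mul_le _ _
    _ ≤ 0 + i • (1 : WithBot ℕ) := by
        refine add_le_add degree_C_le ((degree_pow_le _ _).trans ?_)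
        exact nsmul_le_nsmul_right degree_linear_le i
    _ ≤ p.degree := by
        rw [zero_add]
        have : i • (1 : WithBot ℕ) = (i : WithBot ℕ) := by simp
        rw [this, degree_eq_natDegree hp]
        exact_mod_cast Nat.le_of_lt_succ hi

end Poly

section Mv
open MvPolynomial

noncomputable def Ee : MvPolynomial (Fin 2) ℂ ≃ₐ[ℂ] Polynomial (Polynomial ℂ) :=
  (finSuccEquiv ℂ 1).trans (Polynomial.mapAlgEquiv
    ((finSuccEquiv ℂ 0).trans (Polynomial.mapAlgEquiv (isEmptyAlgEquiv ℂ (Fin 0)))))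

lemma Ee_X0 : Ee (X 0) = Polynomial.X := by
  simp [Ee, finSuccEquiv_X_zero]

lemma Ee_X1 : Ee (X 1) = Polynomial.C Polynomial.X := by
  have h1 : (finSuccEquiv ℂ 1) (X 1) = Polynomial.C (X 0) :=
    finSuccEquiv_X_succ (R := ℂ) (n := 1) (j := 0)
  simp [Ee, h1, Polynomial.coe_mapAlgEquiv, finSuccEquiv_X_zero]

lemma Ee_C (x : ℂ) : Ee (C x) = Polynomial.C (Polynomial.C x) := by
  have : (C x : MvPolynomial (Fin 2) ℂ) = algebraMap ℂ _ x := rfl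
  rw [this, AlgEquiv.commutes]
  rfl

lemma Ee_p (p : Polynomial ℂ) : Ee (Polynomial.aeval (X 1) p) = Polynomial.C p := by
  have h : (Ee.toAlgHom.comp (Polynomial.aeval (X 1))) = Polynomial.CAlgHom (R := ℂ) := by
    apply Polynomial.algHom_ext
    simp only [AlgHom.comp_apply, Polynomial.aeval_X, AlgEquiv.toAlgHom_eq_coe, AlgHom.coe_coe, AlgEquiv.coe_toAlgHom]
    rw [Ee_X1]; rfl
  calc Ee (Polynomial.aeval (X 1) p) = (Ee.toAlgHom.comp (Polynomial.aeval (X 1))) p := rfl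
    _ = Polynomial.CAlgHom (R := ℂ) p := by rw [h]
    _ = Polynomial.C p := rfl

noncomputable def tau (b c : ℂ) : Polynomial ℂ →ₐ[ℂ] Polynomial ℂ :=
  Polynomial.aeval (Polynomial.C b * Polynomial.X + Polynomial.C c)

noncomputable def Gg (a b c : ℂ) (p : Polynomial ℂ) :
    Polynomial (Polynomial ℂ) →ₐ[ℂ] Polynomial (Polynomial ℂ) :=
  ((Polynomial.aeval (Polynomial.C (Polynomial.C a) * Polynomial.X + Polynomial.C p)).restrictScalars ℂ).comp
    (Polynomial.mapAlgHom (tau b c))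

lemma Gg_apply (a b c : ℂ) (p : Polynomial ℂ) (r : Polynomial (Polynomial ℂ)) :
    Gg a b c p r = Polynomial.eval₂
      ((Polynomial.C : Polynomial ℂ →+* Polynomial (Polynomial ℂ)).comp (tau b c).toRingHom)
      (Polynomial.C (Polynomial.C a) * Polynomial.X + Polynomial.C p) r := by
  show Polynomial.aeval _ (Polynomial.map (tau b c).toRingHom r) = _
  rw [Polynomial.aeval_def, Polynomial.eval₂_map, Polynomial.algebraMap_eq]

lemma tau_apply (b c : ℂ) (q : Polynomial ℂ) :
    tau b c q = Polynomial.eval₂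
      ((Polynomial.C : ℂ →+* Polynomial ℂ).comp (RingHom.id ℂ))
      (Polynomial.C b * Polynomial.X + Polynomial.C c) q := by
  rw [tau, Polynomial.aeval_def, Polynomial.algebraMap_eq, RingHom.comp_id]

lemma Gg_X (a b c : ℂ) (p : Polynomial ℂ) :
    Gg a b c p Polynomial.X
      = Polynomial.C (Polynomial.C a) * Polynomial.X + Polynomial.C p := by
  rw [Gg_apply, Polynomial.eval₂_X]

lemma Gg_C (a b c : ℂ) (p : Polynomial ℂ) (q : Polynomial ℂ) :
    Gg a b c p (Polynomial.C q) = Polynomial.C (tau b c q) := by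
  rw [Gg_apply, Polynomial.eval₂_C]; rfl

lemma intertwine (a b c : ℂ) (p : Polynomial ℂ) (f : Fin 2 → MvPolynomial (Fin 2) ℂ)
    (hf : f = ![C a * X 0 + Polynomial.aeval (X 1) p, C b * X 1 + C c]) (r : MvPolynomial (Fin 2) ℂ) :
    Ee (aeval f r) = Gg a b c p (Ee r) := by
  have h : (Ee.toAlgHom.comp (aeval f)) = (Gg a b c p).comp Ee.toAlgHom := by
    apply MvPolynomial.algHom_ext
    intro i
    fin_cases i
    · simp only [AlgHom.comp_apply, AlgEquiv.toAlgHom_eq_coe, AlgHom.coe_coe, aeval_X, hf,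
        Matrix.cons_val_zero, Fin.zero_eta, Fin.isValue, AlgEquiv.coe_toAlgHom]
      rw [Ee_X0, Gg_X, map_add, map_mul, Ee_C, Ee_X0, Ee_p]
    · simp only [AlgHom.comp_apply, AlgEquiv.toAlgHom_eq_coe, AlgHom.coe_coe, aeval_X, hf,
        Matrix.cons_val_one, Matrix.head_cons, Fin.mk_one, Fin.isValue,
          AlgEquiv.coe_toAlgHom, Matrix.cons_val_fin_one]
      rw [Ee_X1, Gg_C, map_add, map_mul, Ee_C, Ee_X1, Ee_C]
      rw [tau, Polynomial.aeval_X, map_add, map_mul]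
  calc Ee (aeval f r) = (Ee.toAlgHom.comp (aeval f)) r := rfl
    _ = (Gg a b c p).comp Ee.toAlgHom r := by rw [h]
    _ = Gg a b c p (Ee r) := rfl

end Mv

section Poly2
open Polynomial

lemma Gg_coeff (a b c : ℂ) (p : Polynomial ℂ) (r : Polynomial (Polynomial ℂ)) :
    (Gg a b c p r).coeff r.natDegree
      = tau b c r.leadingCoeff * (Polynomial.C a) ^ r.natDegree := by
  rw [Gg_apply]; exact key _ _ _ r


lemma tau_coeff (b c : ℂ) (q : Polynomial ℂ) :
    (tau b c q).coeff q.natDegree = q.leadingCoeff * b ^ q.natDegree := by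
  rw [tau_apply]; exact key _ _ _ q

lemma tau_deg (b c : ℂ) (q : Polynomial ℂ) : (tau b c q).degree ≤ q.degree := by
  rw [tau_apply]; exact deg_le _ _ _ q

lemma tau_eig (b c : ℂ) (l : ℕ) : ∃ q : Polynomial ℂ, q ≠ 0 ∧ tau b c q = (b ^ l) • q := by
  by_cases hb1 : b = 1
  · exact ⟨1, one_ne_zero, by simp [hb1]⟩
  · refine ⟨(X + C (c / (b - 1))) ^ l, pow_ne_zero _ (monic_X_add_C _).ne_zero, ?_⟩
    have h1 : tau b c (X + C (c / (b - 1))) = b • (X + C (c / (b - 1))) := by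
      rw [tau, map_add, aeval_X, aeval_C]
      rw [smul_add, smul_eq_C_mul, Polynomial.smul_C]
      have hb0 : b - 1 ≠ 0 := sub_ne_zero.mpr hb1
      have : b • (c / (b - 1)) = c + c / (b - 1) := by
        rw [smul_eq_mul]; field_simp; ring
      rw [this, map_add, Polynomial.algebraMap_eq]
      ring
    rw [map_pow, h1, _root_.smul_pow]

lemma solve (a b c : ℂ) (hab : ∀ d : ℕ, a ≠ b ^ d) (p : Polynomial ℂ) :
    ∃ s : Polynomial ℂ, a • s - tau b c s = p := by
  set n := p.natDegree + 1 with hn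
  set L : Polynomial ℂ →ₗ[ℂ] Polynomial ℂ :=
    a • LinearMap.id - (tau b c).toLinearMap with hL
  have hmap : ∀ x ∈ degreeLT ℂ n, L x ∈ degreeLT ℂ n := by
    intro x hx
    rw [mem_degreeLT] at hx ⊢
    have : L x = a • x - tau b c x := by simp [hL]
    rw [this]
    refine lt_of_le_of_lt (degree_sub_le _ _) (max_lt ?_ ?_)
    · exact lt_of_le_of_lt (degree_smul_le _ _) hx
    · exact lt_of_le_of_lt (tau_deg b c x) hx
  haveI : FiniteDimensional ℂ (degreeLT ℂ n) :=
    Module.Finite.equiv (degreeLTEquiv ℂ n).symm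
  set L' := L.restrict hmap with hL'
  have hinj : Function.Injective L' := by
    rw [← LinearMap.ker_eq_bot, LinearMap.ker_eq_bot']
    rintro ⟨z, hz⟩ hz0
    have hLz : L z = 0 := congrArg Subtype.val hz0
    have heq : a • z = tau b c z := by
      have : a • z - tau b c z = 0 := by simpa [hL] using hLz
      linear_combination (norm := module) this
    ext1
    by_contra hz0'
    have hz0' : z ≠ 0 := hz0'
    have h1 := congrArg (fun q => q.coeff z.natDegree) heq
    simp only [Polynomial.coeff_smul, tau_coeff, smul_eq_mul, coeff_natDegree] at h1
    have : a = b ^ z.natDegree := by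
      have h2 : z.leadingCoeff * a = z.leadingCoeff * b ^ z.natDegree := by
        rw [mul_comm, h1]
      exact mul_left_cancel₀ (leadingCoeff_ne_zero.mpr hz0') h2
    exact hab _ this
  have hsurj := LinearMap.surjective_of_injective hinj
  have hp : p ∈ degreeLT ℂ n := by
    rw [mem_degreeLT, hn]
    exact lt_of_le_of_lt degree_le_natDegree (by exact_mod_cast Nat.lt_succ_self _)
  obtain ⟨z, hz⟩ := hsurj ⟨p, hp⟩
  refine ⟨z.val, ?_⟩
  have : L z.val = p := congrArg Subtype.val hz
  simpa [hL] using this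


lemma conv (a b c μ : ℂ) (p : Polynomial ℂ) (r : Polynomial (Polynomial ℂ))
    (hr : r ≠ 0) (heq : Gg a b c p r = μ • r) : ∃ k l : ℕ, μ = a ^ k * b ^ l := by
  have hLc0 : r.leadingCoeff ≠ 0 := leadingCoeff_ne_zero.mpr hr
  have h1 : tau b c r.leadingCoeff * C a ^ r.natDegree = μ • r.leadingCoeff := by
    have := congrArg (fun q => q.coeff r.natDegree) heq
    simpa only [Gg_coeff, Polynomial.coeff_smul, Polynomial.coeff_natDegree] using this
  have h2 := congrArg (fun q => q.coeff r.leadingCoeff.natDegree) h1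
  simp only [← map_pow, Polynomial.coeff_mul_C, Polynomial.coeff_smul, tau_coeff,
    smul_eq_mul, coeff_natDegree] at h2
  refine ⟨r.natDegree, r.leadingCoeff.natDegree, ?_⟩
  have h3 : r.leadingCoeff.leadingCoeff * (a ^ r.natDegree * b ^ r.leadingCoeff.natDegree)
      = r.leadingCoeff.leadingCoeff * μ := by
    calc _ = r.leadingCoeff.leadingCoeff * b ^ r.leadingCoeff.natDegree * a ^ r.natDegree := by ring
      _ = μ * r.leadingCoeff.leadingCoeff := h2
      _ = _ := by ring
  exact (mul_left_cancel₀ (leadingCoeff_ne_zero.mpr hLc0) h3).symm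

lemma fwd (a b c : ℂ) (hb : b ≠ 0) (p : Polynomial ℂ) (k l : ℕ) :
    ∃ r : Polynomial (Polynomial ℂ), r ≠ 0 ∧ Gg a b c p r = (a ^ k * b ^ l) • r := by
  by_cases hres : ∃ d : ℕ, a = b ^ d
  · obtain ⟨d, rfl⟩ := hres
    obtain ⟨q, hq0, hq⟩ := tau_eig b c (d * k + l)
    refine ⟨Polynomial.C q, by simpa using hq0, ?_⟩
    rw [Gg_C, hq, Polynomial.smul_C]
    congr 1
    rw [← pow_mul, ← pow_add]
  · push_neg at hres
    obtain ⟨s, hs⟩ := solve a b c hres p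
    obtain ⟨q, hq0, hq⟩ := tau_eig b c l
    refine ⟨(Polynomial.X + Polynomial.C s) ^ k * Polynomial.C q,
      mul_ne_zero (pow_ne_zero _ (monic_X_add_C s).ne_zero) (by simpa using hq0), ?_⟩
    rw [map_mul, map_pow, Gg_C, hq, map_add, Gg_X, Gg_C]
    have htau : tau b c s = a • s - p := by
      linear_combination (norm := module) -hs
    have sm : ∀ r : Polynomial (Polynomial ℂ),
        a • r = Polynomial.C (Polynomial.C a) * r := by
      intro r
      rw [← algebraMap_smul (Polynomial ℂ) a r, Polynomial.algebraMap_eq, smul_eq_C_mul]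
    have h1 : Polynomial.C (Polynomial.C a) * Polynomial.X + Polynomial.C p
        + Polynomial.C (tau b c s) = a • (Polynomial.X + Polynomial.C s) := by
      rw [htau, map_sub, ← Polynomial.smul_C, sm (Polynomial.X + Polynomial.C s),
        sm (Polynomial.C s), mul_add]
      ring
    rw [h1, _root_.smul_pow, ← Polynomial.smul_C, smul_mul_assoc, mul_smul_comm, smul_smul]

end Poly2

end Stmt3Aux

open MvPolynomial Stmt3Aux

/-- For a triangular automorphism `f = (aX + p(Y), bY + c)` with `a, b ∈ ℂ*`, the
eigenvalues of the pullback `f*` acting on `ℂ[X,Y]` are exactly the elements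
`a^k b^l` (`k, l ∈ ℕ`) of the multiplicative monoid generated by `a` and `b`. -/
theorem stmt3 (a b c : ℂ) (ha : a ≠ 0) (hb : b ≠ 0) (p : Polynomial ℂ)
    (f : Fin 2 → MvPolynomial (Fin 2) ℂ)
    (hf : f = ![C a * X 0 + Polynomial.aeval (X 1) p, C b * X 1 + C c]) :
    ∀ μ : ℂ, (∃ r : MvPolynomial (Fin 2) ℂ, r ≠ 0 ∧ aeval f r = μ • r) ↔
      ∃ k l : ℕ, μ = a ^ k * b ^ l := by
  intro μ
  constructor
  · rintro ⟨r, hr0, hr⟩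
    have h0 : Ee r ≠ 0 := by
      have := Ee.injective.ne hr0
      simpa using this
    have h1 : Gg a b c p (Ee r) = μ • Ee r := by
      rw [← intertwine a b c p f hf r, hr, map_smul]
    exact conv a b c μ p (Ee r) h0 h1
  · rintro ⟨k, l, rfl⟩
    obtain ⟨r, hr0, hG⟩ := fwd a b c hb p k l
    refine ⟨Ee.symm r, ?_, ?_⟩
    · intro h
      apply hr0
      have := congrArg Ee h
      simpa using this
    · apply Ee.injective
      rw [intertwine a b c p f hf, AlgEquiv.apply_symm_apply, hG, map_smul,
        AlgEquiv.apply_symm_apply]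
end

section
/- Let t = (aX + p(Y), bY) be a triangular automorphism of ℂ² with a, b ∈ ℂ*, and suppose that for every k with a = b^k, the Y^k-coefficient of p vanishes. Then there exists q ∈ ℂ[Y] with deg q = deg p such that, setting χ = (X + q(Y), Y), one has χ ∘ (aX, bY) ∘ χ^{-1} = t. -/
open MvPolynomial

/-- Composition of polynomial endomorphisms of the plane: `(comp2 f g) = f ∘ g`. -/
noncomputable def comp2 (f g : Fin 2 → MvPolynomial (Fin 2) ℂ) :
    Fin 2 → MvPolynomial (Fin 2) ℂ :=
  fun i => aeval g (f i)

/-- If `t = (aX + p(Y), bY)` with `a, b ∈ ℂ*` and `p_k = 0` whenever `a = b^k`, then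
there exists `q` with `deg q = deg p` such that, for `χ = (X + q(Y), Y)` (with inverse
`χ⁻¹ = (X - q(Y), Y)`), one has `χ ∘ (aX, bY) ∘ χ⁻¹ = t`. -/
theorem stmt10 (a b : ℂ) (ha : a ≠ 0) (hb : b ≠ 0) (p : Polynomial ℂ)
    (hp : ∀ k : ℕ, a = b ^ k → p.coeff k = 0)
    (t : Fin 2 → MvPolynomial (Fin 2) ℂ)
    (ht : t = ![C a * X 0 + Polynomial.aeval (X 1) p, C b * X 1]) :
    ∃ q : Polynomial ℂ, q.natDegree = p.natDegree ∧
      comp2 ![X 0 + Polynomial.aeval (X 1) q, X 1]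
        (comp2 ![C a * X 0, C b * X 1] ![X 0 - Polynomial.aeval (X 1) q, X 1]) = t := by
  set c : ℕ → ℂ := fun k => p.coeff k / (b ^ k - a) with hc
  set q : Polynomial ℂ := ∑ k ∈ p.support, Polynomial.C (c k) * Polynomial.X ^ k with hq
  have hczero : ∀ k, k ∉ p.support → c k = 0 := by
    intro k hk
    simp [hc, Polynomial.notMem_support_iff.mp hk]
  have hcoeff : ∀ n, q.coeff n = c n := by
    intro n
    rw [hq, Polynomial.finset_sum_coeff]
    simp only [Polynomial.coeff_C_mul, Polynomial.coeff_X_pow]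
    by_cases hn : n ∈ p.support
    · rw [Finset.sum_eq_single n]
      · simp
      · intro k _ hkn; rw [if_neg (Ne.symm hkn)]; ring
      · intro h; exact absurd hn h
    · rw [hczero n hn]
      apply Finset.sum_eq_zero
      intro k hk
      rcases eq_or_ne k n with rfl | hkn
      · exact absurd hk hn
      · rw [if_neg (Ne.symm hkn)]; ring
  have hcne : ∀ n, c n ≠ 0 ↔ p.coeff n ≠ 0 := by
    intro n
    constructor
    · intro h hpn; simp [hc, hpn] at h
    · intro h
      have hba : b ^ n - a ≠ 0 := by
        intro h0
        exact h (hp n (sub_eq_zero.mp h0).symm)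
      exact div_ne_zero h hba
  have hsupp : q.support = p.support := by
    ext n
    simp only [Polynomial.mem_support_iff, hcoeff]
    exact hcne n
  refine ⟨q, ?_, ?_⟩
  · unfold Polynomial.natDegree Polynomial.degree
    rw [hsupp]
  · have hcomp : q.comp (Polynomial.C b * Polynomial.X)
        = ∑ k ∈ p.support, Polynomial.C (c k * b ^ k) * Polynomial.X ^ k := by
      rw [hq, Polynomial.comp, Polynomial.eval₂_finset_sum]
      refine Finset.sum_congr rfl fun k _ => ?_
      simp only [Polynomial.eval₂_mul, Polynomial.eval₂_C, Polynomial.eval₂_pow, Polynomial.eval₂_X]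
      rw [mul_pow, ← Polynomial.C_pow, Polynomial.C_mul]
      ring
    have hcoeff2 : ∀ n, (q.comp (Polynomial.C b * Polynomial.X)).coeff n = b ^ n * c n := by
      intro n
      rw [hcomp, Polynomial.finset_sum_coeff]
      simp only [Polynomial.coeff_C_mul, Polynomial.coeff_X_pow]
      by_cases hn : n ∈ p.support
      · rw [Finset.sum_eq_single n]
        · simp [mul_comm]
        · intro k _ hkn; rw [if_neg (Ne.symm hkn)]; ring
        · intro h; exact absurd hn h
      · rw [hczero n hn, mul_zero]
        apply Finset.sum_eq_zero
        intro k hk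
        rcases eq_or_ne k n with rfl | hkn
        · exact absurd hk hn
        · rw [if_neg (Ne.symm hkn)]; ring
    have key : q.comp (Polynomial.C b * Polynomial.X) - Polynomial.C a * q = p := by
      ext n
      rw [Polynomial.coeff_sub, Polynomial.coeff_C_mul, hcoeff, hcoeff2]
      by_cases hpn : p.coeff n = 0
      · simp [hc, hpn]
      · have hba : b ^ n - a ≠ 0 := fun h0 => hpn (hp n (sub_eq_zero.mp h0).symm)
        rw [show c n = p.coeff n / (b ^ n - a) from rfl, ← sub_mul, mul_div_cancel₀ _ hba]
    have keyMV : Polynomial.aeval (C b * X 1 : MvPolynomial (Fin 2) ℂ) q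
        - C a * Polynomial.aeval (X 1 : MvPolynomial (Fin 2) ℂ) q
        = Polynomial.aeval (X 1 : MvPolynomial (Fin 2) ℂ) p := by
      have h := congrArg (Polynomial.aeval (X 1 : MvPolynomial (Fin 2) ℂ)) key
      simpa [Polynomial.aeval_comp, MvPolynomial.algebraMap_eq] using h
    have haq : ∀ (g : Fin 2 → MvPolynomial (Fin 2) ℂ) (r : Polynomial ℂ),
        aeval g (Polynomial.aeval (X 1 : MvPolynomial (Fin 2) ℂ) r) = Polynomial.aeval (g 1) r := by
      intro g r
      have h := Polynomial.aeval_algHom_apply (F := MvPolynomial (Fin 2) ℂ →ₐ[ℂ] MvPolynomial (Fin 2) ℂ) (MvPolynomial.aeval (R := ℂ) (S₁ := MvPolynomial (Fin 2) ℂ) g) (X 1 : MvPolynomial (Fin 2) ℂ) r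
      simpa using h.symm
    rw [ht]
    funext i
    fin_cases i
    · show aeval _ _ = _
      simp only [comp2, Matrix.cons_val_zero, Matrix.cons_val_one, Matrix.head_cons,
        map_add, map_sub, map_mul, aeval_X, aeval_C, MvPolynomial.algebraMap_eq,
        haq, Fin.zero_eta, Fin.mk_one, Fin.isValue]
      linear_combination keyMV
    · show aeval _ _ = _
      simp [comp2]
end

section
/- Let B' be a closed ball in a finite-dimensional Euclidean space E, and let g : E → E be a C² map. If g is sufficiently close to the identity in the C² topology on a neighborhood of B' (uniform closeness of g, Dg, and D²g on B'), then g(B') is convex. In particular, there is a C²-neighborhood of the identity such that every g in it maps B' onto a convex set. -/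
open Metric

set_option maxHeartbeats 1000000 in
/-- Convexity lemma: for a closed ball `B'` in a finite-dimensional Euclidean space,
there is a `C²`-neighborhood of the identity (uniform closeness of the map and its
first two derivatives on `B'`) such that every `C²` map `g` in it has `g(B')` convex. -/
theorem stmt18 (E : Type*) [NormedAddCommGroup E] [InnerProductSpace ℝ E]
    [FiniteDimensional ℝ E] (x₀ : E) (R : ℝ) (hR : 0 ≤ R) :
    ∃ ε > (0 : ℝ), ∀ g : E → E, ContDiff ℝ 2 g →
      (∀ x ∈ closedBall x₀ R,
        ‖g x - x‖ ≤ ε ∧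
        ‖iteratedFDeriv ℝ 1 g x - iteratedFDeriv ℝ 1 (fun y => y) x‖ ≤ ε ∧
        ‖iteratedFDeriv ℝ 2 g x - iteratedFDeriv ℝ 2 (fun y => y) x‖ ≤ ε) →
      Convex ℝ (g '' closedBall x₀ R) := by
  have hR1 : (0:ℝ) < R + 1 := by linarith
  set ε : ℝ := 1 / (4 * (R + 1)) with hε_def
  have hε : 0 < ε := by positivity
  refine ⟨ε, hε, ?_⟩
  intro g hg hb
  have hgd : Differentiable ℝ g := hg.differentiable two_ne_zero
  have hg'd : Differentiable ℝ (fderiv ℝ g) :=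
    (hg.fderiv_right (m := 1) (by norm_num)).differentiable one_ne_zero
  -- first derivative bound
  have h1 : ∀ x ∈ closedBall x₀ R, ‖fderiv ℝ g x - ContinuousLinearMap.id ℝ E‖ ≤ ε := by
    intro x hx
    refine ContinuousLinearMap.opNorm_le_bound _ hε.le fun v => ?_
    have h := (hb x hx).2.1
    have e : (fderiv ℝ g x - ContinuousLinearMap.id ℝ E) v
        = (iteratedFDeriv ℝ 1 g x - iteratedFDeriv ℝ 1 (fun y => y) x) (fun _ => v) := by
      simp [iteratedFDeriv_one_apply]
    rw [e]
    calc ‖(iteratedFDeriv ℝ 1 g x - iteratedFDeriv ℝ 1 (fun y => y) x) (fun _ => v)‖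
        ≤ ‖iteratedFDeriv ℝ 1 g x - iteratedFDeriv ℝ 1 (fun y => y) x‖
            * ∏ _i : Fin 1, ‖v‖ := ContinuousMultilinearMap.le_opNorm _ _
      _ ≤ ε * ‖v‖ := by
          simp only [Finset.prod_const, Finset.card_univ, Fintype.card_fin, pow_one]
          exact mul_le_mul_of_nonneg_right h (norm_nonneg v)
  -- second derivative bound
  have h2 : ∀ x ∈ closedBall x₀ R, ‖fderiv ℝ (fderiv ℝ g) x‖ ≤ ε := by
    intro x hx
    have h := (hb x hx).2.2
    have hid : iteratedFDeriv ℝ 2 (fun y : E => y) x = 0 := by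
      have : ‖iteratedFDeriv ℝ 2 (fun y : E => y) x‖ = 0 := by
        rw [← norm_iteratedFDeriv_fderiv, ← norm_iteratedFDeriv_fderiv, norm_iteratedFDeriv_zero,
          show (fderiv ℝ fun y : E => y) = fun _ => ContinuousLinearMap.id ℝ E from
            funext fun y => fderiv_id']
        simp
      exact norm_eq_zero.mp this
    rw [hid, sub_zero] at h
    calc ‖fderiv ℝ (fderiv ℝ g) x‖ = ‖iteratedFDeriv ℝ 2 g x‖ := by
          rw [← norm_iteratedFDeriv_fderiv, ← norm_iteratedFDeriv_fderiv, norm_iteratedFDeriv_zero]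
      _ ≤ ε := h
  -- Lipschitz bound for the derivative
  have hlip : ∀ a ∈ closedBall x₀ R, ∀ b ∈ closedBall x₀ R,
      ‖fderiv ℝ g a - fderiv ℝ g b‖ ≤ ε * ‖a - b‖ := fun a ha b hb' =>
    (convex_closedBall x₀ R).norm_image_sub_le_of_norm_fderiv_le
      (fun z _ => hg'd z) h2 hb' ha
  -- main convexity argument
  intro p hp q hq θ μ hθ hμ hsum
  obtain ⟨x, hx, rfl⟩ := hp
  obtain ⟨y, hy, rfl⟩ := hq
  obtain rfl : μ = 1 - θ := by linarith
  have hxR : ‖x - x₀‖ ≤ R := by rw [← dist_eq_norm]; exact mem_closedBall.mp hx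
  have hyR : ‖y - x₀‖ ≤ R := by rw [← dist_eq_norm]; exact mem_closedBall.mp hy
  set w₀ : E := θ • x + (1 - θ) • y with hw₀
  set c : E := θ • g x + (1 - θ) • g y with hc
  set d : ℝ := ‖x - y‖ with hd
  set u : ℝ := θ * (1 - θ) * d ^ 2 with hu
  set r : ℝ := u / (2 * (R + 1)) with hr
  have hd0 : 0 ≤ d := norm_nonneg _
  have hu0 : 0 ≤ u := mul_nonneg (mul_nonneg hθ hμ) (sq_nonneg d)
  have hr0 : 0 ≤ r := div_nonneg hu0 (by linarith)
  have hdR : d ≤ 2 * R := by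
    have e : x - y = (x - x₀) - (y - x₀) := by abel
    rw [hd, e]
    calc ‖(x - x₀) - (y - x₀)‖ ≤ ‖x - x₀‖ + ‖y - x₀‖ := norm_sub_le _ _
      _ ≤ 2 * R := by linarith
  have hθμ : θ * (1 - θ) ≤ 1/4 := by nlinarith [sq_nonneg (θ - (1 - θ))]
  have huR : u ≤ R ^ 2 := by nlinarith [mul_nonneg hθ hμ, sq_nonneg d]
  have hru : r * (2 * (R + 1)) = u := by rw [hr]; field_simp
  have hε4 : ε * (4 * (R + 1)) = 1 := by rw [hε_def]; field_simp
  have hw₀B : w₀ ∈ closedBall x₀ R := (convex_closedBall x₀ R) hx hy hθ hμ hsum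
  -- parallelogram-type estimate
  have hpar : ‖w₀ - x₀‖ ^ 2 ≤ R ^ 2 - u := by
    have key : w₀ - x₀ = θ • (x - x₀) + (1 - θ) • (y - x₀) := by rw [hw₀]; module
    have e1 : ‖θ • (x - x₀) + (1 - θ) • (y - x₀)‖ ^ 2
        = θ^2 * ‖x - x₀‖^2 + 2*(θ*(1-θ))*(inner ℝ (x-x₀) (y-x₀) : ℝ)
          + (1-θ)^2 * ‖y - x₀‖^2 := by
      rw [norm_add_sq_real, norm_smul, norm_smul, real_inner_smul_left, real_inner_smul_right,
        Real.norm_eq_abs, Real.norm_eq_abs, abs_of_nonneg hθ, abs_of_nonneg hμ]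
      ring
    have e2 : d ^ 2 = ‖x - x₀‖^2 - 2*(inner ℝ (x-x₀) (y-x₀) : ℝ) + ‖y - x₀‖^2 := by
      have e : x - y = (x - x₀) - (y - x₀) := by abel
      rw [hd, e, norm_sub_sq_real]
    have hx2 : ‖x - x₀‖^2 ≤ R^2 := by nlinarith [norm_nonneg (x - x₀)]
    have hy2 : ‖y - x₀‖^2 ≤ R^2 := by nlinarith [norm_nonneg (y - x₀)]
    rw [key, e1, hu, e2]
    nlinarith [mul_le_mul_of_nonneg_left hx2 hθ, mul_le_mul_of_nonneg_left hy2 hμ]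
  -- Taylor estimate at w₀
  set A := fderiv ℝ g w₀ with hA
  have hseg : ∀ v ∈ closedBall x₀ R, ‖g v - g w₀ - A (v - w₀)‖ ≤ ε * ‖v - w₀‖ ^ 2 := by
    intro v hv
    have hsub : segment ℝ w₀ v ⊆ closedBall x₀ R :=
      (convex_closedBall x₀ R).segment_subset hw₀B hv
    have hbound : ∀ z ∈ segment ℝ w₀ v,
        ‖fderiv ℝ (fun p => g p - A p) z‖ ≤ ε * ‖v - w₀‖ := by
      intro z hz
      have hzw : ‖z - w₀‖ ≤ ‖v - w₀‖ := by
        obtain ⟨a, b, ha, hbb, hab, rfl⟩ := hz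
        have e : a • w₀ + b • v - w₀ = b • (v - w₀) := by
          have : a = 1 - b := by linarith
          rw [this]; module
        rw [e, norm_smul, Real.norm_eq_abs, abs_of_nonneg hbb]
        nlinarith [norm_nonneg (v - w₀)]
      have hdz : fderiv ℝ (fun p => g p - A p) z = fderiv ℝ g z - A := by
        rw [fderiv_fun_sub (hgd z) A.differentiableAt, A.fderiv]
      rw [hdz]
      calc ‖fderiv ℝ g z - A‖ = ‖fderiv ℝ g z - fderiv ℝ g w₀‖ := by rw [hA]
        _ ≤ ε * ‖z - w₀‖ := hlip z (hsub hz) w₀ hw₀B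
        _ ≤ ε * ‖v - w₀‖ := mul_le_mul_of_nonneg_left hzw hε.le
    have hdiff : ∀ z ∈ segment ℝ w₀ v, DifferentiableAt ℝ (fun p => g p - A p) z :=
      fun z _ => (hgd z).sub A.differentiableAt
    have hmv := (convex_segment w₀ v).norm_image_sub_le_of_norm_fderiv_le hdiff hbound
      (left_mem_segment ℝ w₀ v) (right_mem_segment ℝ w₀ v)
    calc ‖g v - g w₀ - A (v - w₀)‖ = ‖(g v - A v) - (g w₀ - A w₀)‖ := by
          rw [map_sub]; congr 1; abel
      _ ≤ ε * ‖v - w₀‖ * ‖v - w₀‖ := hmv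
      _ = ε * ‖v - w₀‖ ^ 2 := by ring
  have hxw : ‖x - w₀‖ = (1 - θ) * d := by
    have e : x - w₀ = (1 - θ) • (x - y) := by rw [hw₀]; module
    rw [e, norm_smul, Real.norm_eq_abs, abs_of_nonneg hμ, ← hd]
  have hyw : ‖y - w₀‖ = θ * d := by
    have e : y - w₀ = θ • (y - x) := by rw [hw₀]; module
    rw [e, norm_smul, Real.norm_eq_abs, abs_of_nonneg hθ, norm_sub_rev, ← hd]
  have hcid : c - g w₀ = θ • (g x - g w₀ - A (x - w₀)) + (1 - θ) • (g y - g w₀ - A (y - w₀)) := by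
    have h0 : θ • A (x - w₀) + (1 - θ) • A (y - w₀) = 0 := by
      rw [← map_smul, ← map_smul, ← map_add,
        show θ • (x - w₀) + (1 - θ) • (y - w₀) = 0 from by rw [hw₀]; module, map_zero]
    have e : θ • (g x - g w₀ - A (x - w₀)) + (1 - θ) • (g y - g w₀ - A (y - w₀))
        = (θ • g x + (1 - θ) • g y) - g w₀
          - (θ • A (x - w₀) + (1 - θ) • A (y - w₀)) := by module
    rw [hc, e, h0, sub_zero]
  have hTay : ‖c - g w₀‖ ≤ ε * u := by
    have b1 : ‖g x - g w₀ - A (x - w₀)‖ ≤ ε * ((1 - θ) * d)^2 := by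
      rw [← hxw]; exact hseg x hx
    have b2 : ‖g y - g w₀ - A (y - w₀)‖ ≤ ε * (θ * d)^2 := by
      rw [← hyw]; exact hseg y hy
    calc ‖c - g w₀‖
        = ‖θ • (g x - g w₀ - A (x - w₀)) + (1 - θ) • (g y - g w₀ - A (y - w₀))‖ := by rw [hcid]
      _ ≤ θ * ‖g x - g w₀ - A (x - w₀)‖ + (1 - θ) * ‖g y - g w₀ - A (y - w₀)‖ := by
          refine (norm_add_le _ _).trans ?_
          rw [norm_smul, norm_smul, Real.norm_eq_abs, Real.norm_eq_abs,
            abs_of_nonneg hθ, abs_of_nonneg hμ]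
      _ ≤ θ * (ε * ((1 - θ) * d)^2) + (1 - θ) * (ε * (θ * d)^2) :=
          add_le_add (mul_le_mul_of_nonneg_left b1 hθ) (mul_le_mul_of_nonneg_left b2 hμ)
      _ = ε * u := by rw [hu]; ring
  -- the fixed-point map
  set F : E → E := fun w => w + (c - g w) with hFdef
  have hF : ∀ a ∈ closedBall x₀ R, ∀ b ∈ closedBall x₀ R, ‖F a - F b‖ ≤ ε * ‖a - b‖ := by
    intro a ha b hb'
    have hdiff : ∀ z ∈ closedBall x₀ R, DifferentiableAt ℝ F z :=
      fun z _ => differentiableAt_fun_id.add ((differentiableAt_const c).sub (hgd z))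
    have hbd : ∀ z ∈ closedBall x₀ R, ‖fderiv ℝ F z‖ ≤ ε := by
      intro z hz
      have e : fderiv ℝ F z = ContinuousLinearMap.id ℝ E + (0 - fderiv ℝ g z) := by
        rw [hFdef]
        rw [fderiv_fun_add (g := fun w => c - g w) differentiableAt_fun_id
          ((differentiableAt_const c).sub (hgd z)),
          fderiv_id', fderiv_fun_sub (differentiableAt_const c) (hgd z), fderiv_const_apply]
      rw [e]
      have : ContinuousLinearMap.id ℝ E + (0 - fderiv ℝ g z)
          = -(fderiv ℝ g z - ContinuousLinearMap.id ℝ E) := by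
        rw [zero_sub, neg_sub]; abel
      rw [this, norm_neg]
      exact h1 z hz
    exact (convex_closedBall x₀ R).norm_image_sub_le_of_norm_fderiv_le hdiff hbd hb' ha
  -- the invariant set
  set S : Set E := closedBall w₀ r ∩ closedBall x₀ R with hS
  have hSclosed : IsClosed S := IsClosed.inter Metric.isClosed_closedBall Metric.isClosed_closedBall
  have hw₀S : w₀ ∈ S := ⟨mem_closedBall_self hr0, hw₀B⟩
  have hSB : S ⊆ closedBall x₀ R := fun w hw => hw.2
  have hconv : Convex ℝ S := (convex_closedBall w₀ r).inter (convex_closedBall x₀ R)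
  have hmaps : ∀ w ∈ S, F w ∈ S := by
    intro w hw
    obtain ⟨hw1, hw2⟩ := hw
    have hwr : ‖w - w₀‖ ≤ r := mem_closedBall_iff_norm.mp hw1
    have hFw₀ : ‖F w₀ - w₀‖ ≤ ε * u := by
      have e : F w₀ - w₀ = c - g w₀ := add_sub_cancel_left w₀ (c - g w₀)
      rw [e]; exact hTay
    have h1' : ‖F w - w₀‖ ≤ r := by
      have step : ‖F w - w₀‖ ≤ ε * r + ε * u := by
        calc ‖F w - w₀‖ = ‖(F w - F w₀) + (F w₀ - w₀)‖ := by congr 1; abel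
          _ ≤ ‖F w - F w₀‖ + ‖F w₀ - w₀‖ := norm_add_le _ _
          _ ≤ ε * ‖w - w₀‖ + ε * u := add_le_add (hF w hw2 w₀ hw₀B) hFw₀
          _ ≤ ε * r + ε * u := by
              have := mul_le_mul_of_nonneg_left hwr hε.le
              linarith
      have : ε * r + ε * u ≤ r := by
        nlinarith [mul_nonneg (mul_nonneg hε.le hr0) (by linarith : (0:ℝ) ≤ 2*R + 1),
          mul_nonneg hε.le hr0, mul_nonneg hε.le hu0]
      linarith
    have h2Rr : 2 * R * r ≤ u := by nlinarith
    have hrR : r ≤ R := by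
      rw [hr, div_le_iff₀ (by linarith : (0:ℝ) < 2*(R+1))]
      nlinarith
    have hRr : (0:ℝ) ≤ R - r := by linarith
    have hw₀x₀ : ‖w₀ - x₀‖ ≤ R - r := by
      nlinarith [norm_nonneg (w₀ - x₀)]
    refine ⟨mem_closedBall_iff_norm.mpr h1', mem_closedBall_iff_norm.mpr ?_⟩
    calc ‖F w - x₀‖ = ‖(F w - w₀) + (w₀ - x₀)‖ := by congr 1; abel
      _ ≤ ‖F w - w₀‖ + ‖w₀ - x₀‖ := norm_add_le _ _
      _ ≤ r + (R - r) := add_le_add h1' hw₀x₀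
      _ = R := by ring
  -- Banach fixed point on S
  haveI : Nonempty S := ⟨⟨w₀, hw₀S⟩⟩
  haveI : CompleteSpace S := hSclosed.completeSpace_coe
  set T : S → S := fun w => ⟨F w.1, hmaps w.1 w.2⟩ with hT
  have hcontr : ContractingWith ⟨ε, hε.le⟩ T := by
    constructor
    · change ε < 1
      rw [hε_def, div_lt_one (by linarith : (0:ℝ) < 4*(R+1))]
      linarith
    · apply LipschitzWith.of_dist_le_mul
      intro a b
      rw [Subtype.dist_eq, Subtype.dist_eq, dist_eq_norm, dist_eq_norm]
      exact hF a.1 a.2.2 b.1 b.2.2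
  obtain ⟨z, hzS, hz⟩ : ∃ z ∈ S, F z = z := by
    refine ⟨(ContractingWith.fixedPoint T hcontr).1, (ContractingWith.fixedPoint T hcontr).2, ?_⟩
    exact congrArg Subtype.val hcontr.fixedPoint_isFixedPt
  have hgz : g z = c := by
    have e : z + (c - g z) = z := hz
    have : c - g z = 0 := by
      have := add_eq_left.mp e
      exact this
    have := sub_eq_zero.mp this
    exact this.symm
  exact ⟨z, hzS.2, hgz⟩
end
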